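/- arXiv:1810.12252 — 12 statements merged into one kernel-verified Lean document; each statement's English description precedes it below -/
import Mathlib

section
/- Let L be a Riesz space (a real vector lattice) with a strong unit e > 0, and let H : L → ℝ be a linear functional with H(e) = 1 such that H(u) ≠ 0 for every strong unit u of L. Then H is positive, i.e., H(x) ≥ 0 for every x ≥ 0 in L. -/
/-- An element `u` of a Riesz space is a strong unit if for every `x` there is
`α > 0` with `|x| ≤ α • |u|`. -/
def IsStrongUnit {L : Type*} [Lattice L] [AddCommGroup L] [Module ℝ L]
    (u : L) : Prop :=
  ∀ x : L, ∃ α : ℝ, 0 < α ∧ |x| ≤ α • |u|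

theorem stmt0 {L : Type*} [Lattice L] [AddCommGroup L]
    [CovariantClass L L (· + ·) (· ≤ ·)] [Module ℝ L] [PosSMulMono ℝ L]
    (e : L) (he : 0 < e) (hse : IsStrongUnit e)
    (H : L →ₗ[ℝ] ℝ) (hH1 : H e = 1)
    (hH : ∀ u : L, IsStrongUnit u → H u ≠ 0) :
    ∀ x : L, 0 ≤ x → 0 ≤ H x := by
  intro x hx
  by_contra hneg
  push_neg at hneg
  set t : ℝ := -1 / H x with ht
  have htpos : 0 < t := by
    rw [ht]
    exact div_pos_of_neg_of_neg (by norm_num) hneg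
  set u : L := e + t • x with hu
  have heu : e ≤ u := le_add_of_nonneg_right (smul_nonneg htpos.le hx)
  have hupos : 0 < u := lt_of_lt_of_le he heu
  have hunit : IsStrongUnit u := by
    intro y
    obtain ⟨α, hα, hy⟩ := hse y
    refine ⟨α, hα, ?_⟩
    rw [abs_of_pos hupos]
    calc |y| ≤ α • |e| := hy
      _ = α • e := by rw [abs_of_pos he]
      _ ≤ α • u := smul_le_smul_of_nonneg_left heu hα.le
  apply hH u hunit
  have : H u = 1 + t * H x := by
    rw [hu, map_add, map_smul, hH1]; rfl
  rw [this, ht, div_mul_cancel₀ _ (ne_of_lt hneg)]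
  ring
end

section
/- Let L be a Riesz space (a real vector lattice) with a strong unit e > 0, and let H : L → ℝ be a linear functional with H(e) = 1 such that H(u) ≠ 0 for every strong unit u of L. Then H(p) ∈ {0, 1} for every e-component p of L. -/
section aux

variable {L : Type*} [Lattice L] [AddCommGroup L]
    [CovariantClass L L (· + ·) (· ≤ ·)]

/-- In a lattice-ordered group, disjointness from a fixed nonnegative element
is additive on nonnegative elements. -/
lemma aux_inf_add {a b c : L} (hb : 0 ≤ b) (hc : 0 ≤ c)
    (h1 : a ⊓ c = 0) (h2 : b ⊓ c = 0) : (a + b) ⊓ c = 0 := by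
  have ha : (0 : L) ≤ a := h1.symm.le.trans inf_le_left
  set d := (a + b) ⊓ c with hd
  have hd0 : 0 ≤ d := le_inf (add_nonneg ha hb) hc
  have h3 : d - b ≤ a := sub_le_iff_le_add.2 inf_le_left
  have h4 : d - b ≤ c := le_trans (sub_le_self d hb) inf_le_right
  have h5 : d - b ≤ 0 := (le_inf h3 h4).trans h1.le
  have h6 : d ≤ b := sub_nonpos.1 h5
  have h7 : d ≤ 0 := (le_inf h6 inf_le_right).trans h2.le
  exact le_antisymm h7 hd0

lemma aux_nsmul {p q : L} (hq : 0 ≤ q) (h : p ⊓ q = 0) :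
    ∀ n : ℕ, (n • p) ⊓ q = 0 := by
  have hp : (0 : L) ≤ p := h.symm.le.trans inf_le_left
  intro n
  induction n with
  | zero => simpa using inf_eq_left.2 hq
  | succ n ih =>
      rw [succ_nsmul]
      exact aux_inf_add hp hq ih h

variable [Module ℝ L] [PosSMulMono ℝ L]

lemma aux_smul_mono {s t : ℝ} {p : L} (h : s ≤ t) (hp : 0 ≤ p) :
    s • p ≤ t • p := by
  have h0 : (0 : L) ≤ (t - s) • p := smul_nonneg (by linarith) hp
  rw [sub_smul] at h0
  exact sub_nonneg.1 h0

lemma aux_smul_disjoint {p q : L} {s t : ℝ} (hp : 0 ≤ p) (hq : 0 ≤ q)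
    (h : p ⊓ q = 0) (hs : 0 ≤ s) (ht : 0 ≤ t) : (s • p) ⊓ (t • q) = 0 := by
  obtain ⟨n, hn⟩ := exists_nat_ge (max s t)
  have h1 : s • p ≤ (n : ℝ) • p :=
    aux_smul_mono ((le_max_left s t).trans hn) hp
  have h2 : t • q ≤ (n : ℝ) • q :=
    aux_smul_mono ((le_max_right s t).trans hn) hq
  have hnp : (n • p) ⊓ q = 0 := aux_nsmul hq h n
  have hnq : (n • q) ⊓ (n • p) = 0 := by
    have h' : q ⊓ (n • p) = 0 := by rw [inf_comm]; exact hnp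
    exact aux_nsmul (nsmul_nonneg hp n) h' n
  have hnn : ((n : ℝ) • p) ⊓ ((n : ℝ) • q) = 0 := by
    rw [Nat.cast_smul_eq_nsmul, Nat.cast_smul_eq_nsmul, inf_comm]
    exact hnq
  have hle : (s • p) ⊓ (t • q) ≤ 0 := hnn ▸ inf_le_inf h1 h2
  exact le_antisymm hle (le_inf (smul_nonneg hs hp) (smul_nonneg ht hq))

lemma aux_abs_sub {a b : L} (ha : 0 ≤ a) (hb : 0 ≤ b) (hab : a ⊓ b = 0) :
    |a - b| = a + b := by
  have h1 : (a ⊔ b) - (a ⊓ b) = |b - a| := sup_sub_inf_eq_abs_sub a b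
  rw [hab, sub_zero] at h1
  have h2 : (a ⊓ b) + (a ⊔ b) = a + b := inf_add_sup a b
  rw [hab, zero_add] at h2
  rw [abs_sub_comm, ← h1, h2]

end aux

theorem stmt1 {L : Type*} [Lattice L] [AddCommGroup L]
    [CovariantClass L L (· + ·) (· ≤ ·)] [Module ℝ L] [PosSMulMono ℝ L]
    (e : L) (he : 0 < e) (hse : IsStrongUnit e)
    (H : L →ₗ[ℝ] ℝ) (hH1 : H e = 1)
    (hH : ∀ u : L, IsStrongUnit u → H u ≠ 0) :
    ∀ p : L, p ⊓ (e - p) = 0 → H p = 0 ∨ H p = 1 := by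
  intro p hpq
  have hp : (0 : L) ≤ p := hpq.symm.le.trans inf_le_left
  have hq : (0 : L) ≤ e - p := hpq.symm.le.trans inf_le_right
  by_contra hcon
  push_neg at hcon
  obtain ⟨h0, h1⟩ := hcon
  set c : ℝ := H p with hc
  have hq' : H (e - p) = 1 - c := by rw [map_sub, hH1]
  have hs : 0 < |1 - c| := abs_pos.2 (sub_ne_zero.2 (Ne.symm h1))
  have ht : 0 < |c| := abs_pos.2 h0
  set a : L := |1 - c| • p with hadef
  set b : L := |c| • (e - p) with hbdef
  have ha : 0 ≤ a := smul_nonneg hs.le hp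
  have hb : 0 ≤ b := smul_nonneg ht.le hq
  have hab : a ⊓ b = 0 := aux_smul_disjoint hp hq hpq hs.le ht.le
  set u : L := (1 - c) • p - c • (e - p) with hudef
  have hu_abs : |u| = a + b := by
    rcases lt_trichotomy c 0 with hc0 | hc0 | hc0
    · have e1 : |c| = -c := abs_of_neg hc0
      have e2 : |1 - c| = 1 - c := abs_of_pos (by linarith)
      have hu : u = a + b := by
        rw [hudef, hadef, hbdef, e1, e2, neg_smul, sub_eq_add_neg]
      rw [hu]
      exact abs_of_nonneg (add_nonneg ha hb)
    · exact absurd hc0 h0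
    · rcases lt_or_ge c 1 with hc1 | hc1
      · have e1 : |c| = c := abs_of_pos hc0
        have e2 : |1 - c| = 1 - c := abs_of_pos (by linarith)
        have hu : u = a - b := by rw [hudef, hadef, hbdef, e1, e2]
        rw [hu]
        exact aux_abs_sub ha hb hab
      · have hc1' : 1 < c := lt_of_le_of_ne hc1 (Ne.symm h1)
        have e1 : |c| = c := abs_of_pos hc0
        have e2 : |1 - c| = -(1 - c) := abs_of_neg (by linarith)
        have hu : u = -(a + b) := by
          rw [hudef, hadef, hbdef, e1, e2, neg_smul, neg_add, sub_eq_add_neg,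
            neg_neg]
        rw [hu, abs_neg]
        exact abs_of_nonneg (add_nonneg ha hb)
  have hmin : 0 < min |1 - c| |c| := lt_min hs ht
  have hsu : IsStrongUnit u := by
    intro x
    obtain ⟨α, hα, hx⟩ := hse x
    refine ⟨α / min |1 - c| |c|, div_pos hα hmin, ?_⟩
    have key : min |1 - c| |c| • e ≤ a + b := by
      have hsplit : min |1 - c| |c| • e
          = min |1 - c| |c| • p + min |1 - c| |c| • (e - p) := by
        rw [← smul_add, add_sub_cancel]
      rw [hsplit]
      exact add_le_add (aux_smul_mono (min_le_left _ _) hp)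
        (aux_smul_mono (min_le_right _ _) hq)
    calc |x| ≤ α • |e| := hx
      _ = α • e := by rw [abs_of_pos he]
      _ = (α / min |1 - c| |c|) • (min |1 - c| |c| • e) := by
          rw [smul_smul, div_mul_cancel₀ _ hmin.ne']
      _ ≤ (α / min |1 - c| |c|) • (a + b) :=
          smul_le_smul_of_nonneg_left key (div_pos hα hmin).le
      _ = (α / min |1 - c| |c|) • |u| := by rw [hu_abs]
  have hHu : H u = 0 := by
    rw [hudef, map_sub, map_smul, map_smul, smul_eq_mul, smul_eq_mul, hq', ← hc]
    ring
  exact hH u hsu hHu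
end

section
/- Let L be a Riesz space (a real vector lattice) with a strong unit e > 0, and let H : L → ℝ be a linear functional with H(e) = 1 such that H(u) ≠ 0 for every strong unit u of L. If p, q ∈ L are e-components with p ⊓ q = 0, then H(p)·H(q) = 0. -/
section aux
variable {L : Type*} [Lattice L] [AddCommGroup L]
    [CovariantClass L L (· + ·) (· ≤ ·)] [Module ℝ L] [PosSMulMono ℝ L]

lemma my_smul_nonneg {a : L} {s : ℝ} (hs : 0 ≤ s) (ha : 0 ≤ a) : 0 ≤ s • a := by
  calc (0:L) = s • 0 := by rw [smul_zero]
    _ ≤ s • a := smul_le_smul_of_nonneg_left ha hs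

/-- scalar-side monotonicity from vector nonnegativity -/
lemma my_smul_le_smul {a : L} {s t : ℝ} (hst : s ≤ t) (ha : 0 ≤ a) :
    s • a ≤ t • a := by
  have h : 0 ≤ (t - s) • a := my_smul_nonneg (by linarith) ha
  have := add_le_add_left h (s • a)
  simpa [sub_smul, ← add_smul] using this

/-- scaled disjointness -/
lemma disj_smul {a b : L} (ha : 0 ≤ a) (hb : 0 ≤ b) (hab : a ⊓ b = 0)
    {s : ℝ} (hs : 0 ≤ s) : a ⊓ s • b = 0 := by
  rcases le_or_gt s 1 with h1 | h1
  · refine le_antisymm ?_ (le_inf ha (my_smul_nonneg hs hb))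
    calc a ⊓ s • b ≤ a ⊓ b := by
          refine inf_le_inf_left a ?_
          simpa using my_smul_le_smul h1 hb
      _ = 0 := hab
  · refine le_antisymm ?_ (le_inf ha (my_smul_nonneg hs hb))
    have spos : (0:ℝ) < s := by linarith
    have key : s • a ⊓ s • b ≤ s • (a ⊓ b) := by
      have h2 : s⁻¹ • (s • a ⊓ s • b) ≤ a ⊓ b := by
        refine le_inf ?_ ?_
        · calc s⁻¹ • (s • a ⊓ s • b) ≤ s⁻¹ • (s • a) :=
                smul_le_smul_of_nonneg_left inf_le_left (by positivity)
            _ = a := by rw [smul_smul, inv_mul_cancel₀ spos.ne', one_smul]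
        · calc s⁻¹ • (s • a ⊓ s • b) ≤ s⁻¹ • (s • b) :=
                smul_le_smul_of_nonneg_left inf_le_right (by positivity)
            _ = b := by rw [smul_smul, inv_mul_cancel₀ spos.ne', one_smul]
      calc s • a ⊓ s • b = s • (s⁻¹ • (s • a ⊓ s • b)) := by
            rw [smul_smul, mul_inv_cancel₀ spos.ne', one_smul]
        _ ≤ s • (a ⊓ b) := smul_le_smul_of_nonneg_left h2 spos.le
    calc a ⊓ s • b ≤ s • a ⊓ s • b := by
          refine inf_le_inf_right _ ?_
          simpa using my_smul_le_smul h1.le ha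
      _ ≤ s • (a ⊓ b) := key
      _ = 0 := by rw [hab, smul_zero]

/-- every component value of a unital unit-preserving functional is 0 or 1 -/
lemma comp_val {e : L} (he : 0 < e) (hse : IsStrongUnit e)
    (H : L →ₗ[ℝ] ℝ) (hH1 : H e = 1)
    (hH : ∀ u : L, IsStrongUnit u → H u ≠ 0)
    {c : L} (hc : c ⊓ (e - c) = 0) : H c = 0 ∨ H c = 1 := by
  by_contra hcon
  push_neg at hcon
  obtain ⟨h0, h1⟩ := hcon
  set t : ℝ := (H c)⁻¹ with ht
  have ht1 : t ≠ 1 := by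
    intro h; exact h1 (inv_eq_one.mp (by rw [← ht]; exact h))
  have hc0 : 0 ≤ c := hc ▸ inf_le_left
  have hec0 : 0 ≤ e - c := hc ▸ inf_le_right
  have hce : c ≤ e := sub_nonneg.mp hec0
  -- u := e - t • c is a strong unit
  set u : L := e - t • c with hu
  -- find δ > 0 with δ • e ≤ |u|
  have key : ∃ δ : ℝ, 0 < δ ∧ δ • e ≤ |u| := by
    rcases lt_or_ge t 1 with hlt | hge
    · -- u ≥ min(1, 1-t) • e ≥ 0
      refine ⟨min 1 (1 - t), lt_min one_pos (by linarith), ?_⟩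
      have hu0 : min 1 (1 - t) • e ≤ u := by
        rcases le_or_gt t 0 with h | h
        · have : (0:L) ≤ (-t) • c := my_smul_nonneg (by linarith) hc0
          calc min 1 (1 - t) • e ≤ 1 • e := my_smul_le_smul (min_le_left _ _) he.le
            _ = e := one_smul _ _
            _ ≤ e + (-t) • c := le_add_of_nonneg_right this
            _ = u := by rw [hu, sub_eq_add_neg, ← neg_smul]
        · have htc : t • c ≤ t • e := smul_le_smul_of_nonneg_left hce h.le
          calc min 1 (1 - t) • e ≤ (1 - t) • e := my_smul_le_smul (min_le_right _ _) he.le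
            _ = e - t • e := by rw [sub_smul, one_smul]
            _ ≤ e - t • c := by simpa using sub_le_sub_left htc e
            _ = u := rfl
      have hupos : 0 ≤ u :=
        le_trans (my_smul_nonneg (le_min zero_le_one (by linarith)) he.le) hu0
      rw [abs_of_nonneg hupos]
      exact hu0
    · rcases eq_or_lt_of_le hge with h | h
      · exact absurd h.symm ht1
      -- t > 1: u = (e - c) - (t-1) • c, disjoint nonneg pieces
      have hd : (e - c) ⊓ ((t - 1) • c) = 0 :=
        disj_smul hec0 hc0 (by rw [inf_comm]; exact hc) (by linarith)
      have habs : |u| = (e - c) + (t - 1) • c := by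
        have h1' : u = (e - c) - (t - 1) • c := by
          rw [hu, sub_smul, one_smul]; abel
        have hsup : (e - c) ⊔ ((t - 1) • c) = (e - c) + (t - 1) • c := by
          have := inf_add_sup (e - c) ((t - 1) • c)
          rw [hd, zero_add] at this
          exact this
        have := sup_sub_inf_eq_abs_sub ((t - 1) • c) (e - c)
        rw [sup_comm, inf_comm] at this
        rw [h1', ← this, hsup, hd, sub_zero]
      refine ⟨min 1 (t - 1), lt_min one_pos (by linarith), ?_⟩
      rw [habs]
      have h1le : min 1 (t - 1) • (e - c) ≤ e - c := by
        calc min 1 (t-1) • (e - c) ≤ 1 • (e - c) := my_smul_le_smul (min_le_left _ _) hec0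
          _ = e - c := one_smul _ _
      have h2le : min 1 (t - 1) • c ≤ (t - 1) • c := my_smul_le_smul (min_le_right _ _) hc0
      calc min 1 (t - 1) • e = min 1 (t-1) • (e - c) + min 1 (t-1) • c := by
            rw [← smul_add]; congr 1; abel
        _ ≤ (e - c) + (t - 1) • c := add_le_add h1le h2le
  obtain ⟨δ, hδ, hδe⟩ := key
  have hunit : IsStrongUnit u := by
    intro x
    obtain ⟨α, hα, hx⟩ := hse x
    refine ⟨α / δ, by positivity, ?_⟩
    calc |x| ≤ α • |e| := hx
      _ = (α / δ) • (δ • e) := by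
            rw [smul_smul, div_mul_cancel₀ _ hδ.ne', abs_of_nonneg he.le]
      _ ≤ (α / δ) • |u| := smul_le_smul_of_nonneg_left hδe (by positivity)
  refine hH u hunit ?_
  rw [hu, map_sub, map_smul, hH1, ht, smul_eq_mul, inv_mul_cancel₀ h0, sub_self]

end aux

theorem stmt2 {L : Type*} [Lattice L] [AddCommGroup L]
    [CovariantClass L L (· + ·) (· ≤ ·)] [Module ℝ L] [PosSMulMono ℝ L]
    (e : L) (he : 0 < e) (hse : IsStrongUnit e)
    (H : L →ₗ[ℝ] ℝ) (hH1 : H e = 1)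
    (hH : ∀ u : L, IsStrongUnit u → H u ≠ 0)
    (p q : L) (hp : p ⊓ (e - p) = 0) (hq : q ⊓ (e - q) = 0)
    (hpq : p ⊓ q = 0) :
    H p * H q = 0 := by
  have hp0 : 0 ≤ p := hp ▸ inf_le_left
  have hq0 : 0 ≤ q := hq ▸ inf_le_left
  have hep : 0 ≤ e - p := hp ▸ inf_le_right
  have heq : 0 ≤ e - q := hq ▸ inf_le_right
  -- p + q is a component
  have hrq : p + q ≤ e := by
    have hsup : p ⊔ q = p + q := by
      have := inf_add_sup p q
      rw [hpq, zero_add] at this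
      exact this
    rw [← hsup]
    exact sup_le (sub_nonneg.mp hep) (sub_nonneg.mp heq)
  have hr : (p + q) ⊓ (e - (p + q)) = 0 := by
    set z := e - (p + q) with hz
    have hz0 : 0 ≤ z := sub_nonneg.mpr hrq
    have hzep : z ≤ e - p := by
      rw [hz]; exact sub_le_sub_left (le_add_of_nonneg_right hq0 : p ≤ p + q) e
    have hzeq : z ≤ e - q := by
      rw [hz]; exact sub_le_sub_left (le_add_of_nonneg_left hp0 : q ≤ p + q) e
    have hqz : q ⊓ z = 0 :=
      le_antisymm (hq ▸ inf_le_inf_left q hzeq) (le_inf hq0 hz0)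
    refine le_antisymm ?_ (le_inf (by simpa using add_le_add hp0 hq0) hz0)
    set w := (p + q) ⊓ z with hw
    have h1 : w - q ⊓ z = (w - q) ⊔ (w - z) := sub_inf q z w
    have h2 : w - q ≤ p ⊓ z := by
      refine le_inf ?_ ?_
      · have : w ≤ p + q := inf_le_left
        calc w - q ≤ (p + q) - q := sub_le_sub_right this q
          _ = p := by abel
      · calc w - q ≤ z - q := sub_le_sub_right inf_le_right q
          _ ≤ z - 0 := sub_le_sub_left hq0 z
          _ = z := sub_zero z
    have h3 : w - z ≤ p ⊓ z := by
      have hwz : w ≤ z := inf_le_right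
      calc w - z ≤ z - z := sub_le_sub_right hwz z
        _ = 0 := sub_self z
        _ ≤ p ⊓ z := le_inf hp0 hz0
    have h4 : w ≤ p ⊓ z := by
      have := sup_le h2 h3
      rw [← h1, hqz, sub_zero] at this
      exact this
    calc w ≤ p ⊓ z := h4
      _ ≤ p ⊓ (e - p) := inf_le_inf_left p hzep
      _ = 0 := hp
  have Hp := comp_val he hse H hH1 hH hp
  have Hq := comp_val he hse H hH1 hH hq
  have Hr := comp_val he hse H hH1 hH hr
  rw [map_add] at Hr
  rcases Hp with h | h
  · rw [h, zero_mul]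
  rcases Hq with h' | h'
  · rw [h', mul_zero]
  exfalso
  rcases Hr with h'' | h'' <;> rw [h, h'] at h'' <;> norm_num at h''
end

section
/- Let L be a Riesz space (a real vector lattice) with a strong unit e > 0, and let H : L → ℝ be a linear functional with H(e) = 1 such that |H(u)| = H(|u|) for every strong unit u of L. Then H is positive, i.e., H(x) ≥ 0 for every x ≥ 0 in L. -/
theorem stmt3 {L : Type*} [Lattice L] [AddCommGroup L]
    [CovariantClass L L (· + ·) (· ≤ ·)] [Module ℝ L] [PosSMulMono ℝ L]
    (e : L) (he : 0 < e) (hse : IsStrongUnit e)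
    (H : L →ₗ[ℝ] ℝ) (hH1 : H e = 1)
    (hH : ∀ u : L, IsStrongUnit u → |H u| = H |u|) :
    ∀ x : L, 0 ≤ x → 0 ≤ H x := by
  intro x hx
  -- key: for every ε > 0, H x + ε ≥ 0
  have key : ∀ ε : ℝ, 0 < ε → 0 ≤ H x + ε := by
    intro ε hε
    set u : L := x + ε • e with hu
    have hu0 : 0 ≤ u := by
      have : 0 ≤ ε • e := smul_nonneg hε.le he.le
      have := add_le_add hx this
      simpa using this
    have huabs : |u| = u := abs_of_nonneg hu0
    have hunit : IsStrongUnit u := by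
      intro y
      obtain ⟨α, hα, hy⟩ := hse y
      refine ⟨α / ε, div_pos hα hε, ?_⟩
      rw [huabs]
      calc |y| ≤ α • |e| := hy
        _ = (α / ε) • (ε • e) := by
            rw [abs_of_nonneg he.le, smul_smul, div_mul_cancel₀ _ hε.ne']
        _ ≤ (α / ε) • u := by
            apply smul_le_smul_of_nonneg_left _ (div_pos hα hε).le
            simpa [hu] using add_le_add hx (le_refl (ε • e))
    have := hH u hunit
    rw [huabs] at this
    have h0 : 0 ≤ H u := this ▸ abs_nonneg _
    have : H u = H x + ε := by
      simp [hu, map_add, map_smul, hH1]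
    linarith
  by_contra h
  push_neg at h
  have := key (-(H x) / 2) (by linarith)
  linarith
end

section
/- Let L be a Riesz space (a real vector lattice) with a strong unit e > 0, and let H : L → ℝ be a linear functional with H(e) = 1 such that |H(u)| = H(|u|) for every strong unit u of L. Then H(p) ∈ {0, 1} for every e-component p of L. -/
theorem stmt4 {L : Type*} [Lattice L] [AddCommGroup L]
    [CovariantClass L L (· + ·) (· ≤ ·)] [Module ℝ L] [PosSMulMono ℝ L]
    (e : L) (he : 0 < e) (hse : IsStrongUnit e)
    (H : L →ₗ[ℝ] ℝ) (hH1 : H e = 1)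
    (hH : ∀ u : L, IsStrongUnit u → |H u| = H |u|) :
    ∀ p : L, p ⊓ (e - p) = 0 → H p = 0 ∨ H p = 1 := by
  intro p hp
  have habs : |p - (e - p)| = e := by
    rw [← sup_sub_inf_eq_abs_sub, inf_comm, hp, sub_zero, sup_comm]
    have h2 := inf_add_sup p (e - p)
    rw [hp, zero_add] at h2
    rw [h2]
    abel
  have hu : IsStrongUnit (p - (e - p)) := by
    intro x
    obtain ⟨α, hα, hx⟩ := hse x
    refine ⟨α, hα, ?_⟩
    rwa [habs, ← abs_of_pos he]
  have h := hH _ hu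
  rw [habs, hH1] at h
  rw [map_sub, map_sub, hH1] at h
  rcases abs_eq (by norm_num : (0:ℝ) ≤ 1) |>.mp h with h1 | h1
  · right; linarith
  · left; linarith
end

section
/- Let L be a Riesz space (a real vector lattice) with a strong unit e > 0, and let H : L → ℝ be a linear functional with H(e) = 1 such that H(u) ≠ 0 for every strong unit u of L. Then |H(u)| = H(|u|) for every strong unit u of L. -/
section Aux

set_option linter.unusedSectionVars false

variable {L : Type*} [Lattice L] [AddCommGroup L]
    [CovariantClass L L (· + ·) (· ≤ ·)] [Module ℝ L] [PosSMulMono ℝ L]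

/-- Monotonicity in the scalar, for nonnegative vectors. -/
lemma smul_le_smul_vec {p q : ℝ} {x : L} (hpq : p ≤ q) (hx : 0 ≤ x) :
    p • x ≤ q • x := by
  have h : 0 ≤ (q - p) • x := smul_nonneg (by linarith) hx
  calc p • x ≤ p • x + (q - p) • x := le_add_of_nonneg_right h
    _ = q • x := by rw [← add_smul]; ring_nf

/-- Anything above a nonnegative strong unit is a strong unit. -/
lemma isStrongUnit_of_le {v w : L} (hv : IsStrongUnit v) (hv0 : 0 ≤ v)
    (hvw : v ≤ w) : IsStrongUnit w := by
  intro x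
  obtain ⟨α, hα, hle⟩ := hv x
  refine ⟨α, hα, hle.trans ?_⟩
  have hw0 : 0 ≤ w := hv0.trans hvw
  rw [abs_of_nonneg hv0, abs_of_nonneg hw0]
  exact smul_le_smul_of_nonneg_left hvw hα.le

lemma isStrongUnit_abs {u : L} (hu : IsStrongUnit u) : IsStrongUnit |u| := by
  intro x
  obtain ⟨α, hα, hle⟩ := hu x
  exact ⟨α, hα, by rwa [abs_abs]⟩

/-- Scaled positive and negative parts are disjoint. -/
lemma smul_posPart_inf_smul_negPart {p q : ℝ} (hp : 0 < p) (hq : 0 < q)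
    (u : L) : (p • u⁺) ⊓ (q • u⁻) = (0 : L) := by
  set z : L := (p • u⁺) ⊓ (q • u⁻) with hz
  have hP : (0 : L) ≤ u⁺ := posPart_nonneg u
  have hN : (0 : L) ≤ u⁻ := negPart_nonneg u
  have hz0 : (0 : L) ≤ z := le_inf (smul_nonneg hp.le hP) (smul_nonneg hq.le hN)
  set r : ℝ := min (1 / p) (1 / q) with hr
  have hr0 : 0 < r := lt_min (by positivity) (by positivity)
  have h1 : r • z ≤ u⁺ := by
    calc r • z ≤ r • (p • u⁺) := smul_le_smul_of_nonneg_left inf_le_left hr0.le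
      _ = (r * p) • u⁺ := by rw [smul_smul]
      _ ≤ (1 : ℝ) • u⁺ := smul_le_smul_vec (by
            have h : r ≤ 1 / p := min_le_left _ _
            calc r * p ≤ (1 / p) * p := by nlinarith
              _ = 1 := by field_simp) hP
      _ = u⁺ := one_smul _ _
  have h2 : r • z ≤ u⁻ := by
    calc r • z ≤ r • (q • u⁻) := smul_le_smul_of_nonneg_left inf_le_right hr0.le
      _ = (r * q) • u⁻ := by rw [smul_smul]
      _ ≤ (1 : ℝ) • u⁻ := smul_le_smul_vec (by
            have h : r ≤ 1 / q := min_le_right _ _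
            calc r * q ≤ (1 / q) * q := by nlinarith
              _ = 1 := by field_simp) hN
      _ = u⁻ := one_smul _ _
  have h3 : r • z ≤ 0 := by
    have h := le_inf h1 h2
    rwa [posPart_inf_negPart_eq_zero] at h
  have h4 : z ≤ 0 := by
    have h := smul_le_smul_of_nonneg_left h3 (le_of_lt (by positivity : (0:ℝ) < 1 / r))
    rwa [smul_smul, one_div_mul_cancel hr0.ne', one_smul, smul_zero] at h
  exact le_antisymm h4 hz0

/-- Absolute value of a difference of disjoint nonnegative elements. -/
lemma abs_sub_of_disjoint' {x y : L} (hx : 0 ≤ x) (hy : 0 ≤ y)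
    (hxy : x ⊓ y = 0) : |x - y| = x + y := by
  have hsup : x ⊔ y = x + y := by
    have h := inf_add_sup x y
    rwa [hxy, zero_add] at h
  refine le_antisymm ?_ ?_
  · calc |x - y| = |x + -y| := by rw [sub_eq_add_neg]
      _ ≤ |x| + |(-y)| := abs_add_le _ _
      _ = x + y := by rw [abs_neg, abs_of_nonneg hx, abs_of_nonneg hy]
  · rw [← hsup]
    have h1 : x ≤ |x - y| := by
      have h : x - x ⊓ y = (x - x) ⊔ (x - y) := sub_inf x y x
      rw [hxy, sub_zero, sub_self] at h
      exact h.le.trans (sup_le (abs_nonneg _) (le_abs_self _))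
    have h2 : y ≤ |x - y| := by
      have h : y - x ⊓ y = (y - x) ⊔ (y - y) := sub_inf x y y
      rw [hxy, sub_zero, sub_self] at h
      refine h.le.trans (sup_le ?_ (abs_nonneg _))
      rw [← neg_sub x y]
      exact neg_le_abs (x - y)
    exact sup_le h1 h2

end Aux

theorem stmt5 {L : Type*} [Lattice L] [AddCommGroup L]
    [CovariantClass L L (· + ·) (· ≤ ·)] [Module ℝ L] [PosSMulMono ℝ L]
    (e : L) (he : 0 < e) (hse : IsStrongUnit e)
    (H : L →ₗ[ℝ] ℝ) (hH1 : H e = 1)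
    (hH : ∀ u : L, IsStrongUnit u → H u ≠ 0) :
    ∀ u : L, IsStrongUnit u → |H u| = H |u| := by
  -- First: H |v| > 0 for every strong unit v.
  have habs_pos : ∀ v : L, IsStrongUnit v → 0 < H |v| := by
    intro v hv
    by_contra hcon
    push_neg at hcon
    set s : ℝ := -(H |v|) with hs
    have hs0 : 0 ≤ s := by simp [hs]; linarith
    have hvabs : IsStrongUnit |v| := isStrongUnit_abs hv
    have hvabs0 : (0 : L) ≤ |v| := abs_nonneg v
    have hle : |v| ≤ |v| + s • e := le_add_of_nonneg_right (smul_nonneg hs0 he.le)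
    have hunit : IsStrongUnit (|v| + s • e) := isStrongUnit_of_le hvabs hvabs0 hle
    have hzero : H (|v| + s • e) = 0 := by
      simp [map_add, map_smul, hH1, hs]
    exact hH _ hunit hzero
  intro u hu
  have hP : (0 : L) ≤ u⁺ := posPart_nonneg u
  have hN : (0 : L) ≤ u⁻ := negPart_nonneg u
  have hdecomp : u⁺ - u⁻ = u := posPart_sub_negPart u
  have habs : u⁺ + u⁻ = |u| := posPart_add_negPart u
  set a : ℝ := H u⁻ with ha
  set b : ℝ := H u⁺ with hb
  have hHu : H u = b - a := by rw [← hdecomp, map_sub]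
  have hHabs : H |u| = b + a := by rw [← habs, map_add]
  have hpos : 0 < b + a := by rw [← hHabs]; exact habs_pos u hu
  by_cases haz : a = 0
  · rw [hHu, hHabs, haz, sub_zero, add_zero]
    have hb0 : 0 < b := by rw [haz] at hpos; linarith
    exact abs_of_pos hb0
  by_cases hbz : b = 0
  · rw [hHu, hHabs, hbz, zero_sub, zero_add, abs_neg]
    have ha0 : 0 < a := by rw [hbz] at hpos; linarith
    exact abs_of_pos ha0
  -- contradiction case
  exfalso
  set p : ℝ := |a| with hp
  set q : ℝ := |b| with hq
  have hp0 : 0 < p := abs_pos.2 haz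
  have hq0 : 0 < q := abs_pos.2 hbz
  obtain ⟨w, hwabs, hwH⟩ :
      ∃ w : L, |w| = p • u⁺ + q • u⁻ ∧ H w = 0 := by
    rcases le_or_gt (a * b) 0 with hab | hab
    · -- opposite signs: use p • u⁺ + q • u⁻
      have hab' : a * b < 0 := lt_of_le_of_ne hab (by
        intro h; rcases mul_eq_zero.1 h with h | h
        exacts [haz h, hbz h])
      refine ⟨p • u⁺ + q • u⁻, ?_, ?_⟩
      · exact abs_of_nonneg (add_nonneg (smul_nonneg hp0.le hP) (smul_nonneg hq0.le hN))
      · rw [map_add, map_smul, map_smul]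
        simp only [smul_eq_mul, ← hb, ← ha]
        show p * b + q * a = 0
        rcases lt_or_gt_of_ne haz with hA | hA <;> rcases lt_or_gt_of_ne hbz with hB | hB
        · nlinarith
        · rw [hp, hq, abs_of_neg hA, abs_of_pos hB]; ring
        · rw [hp, hq, abs_of_pos hA, abs_of_neg hB]; ring
        · nlinarith
    · -- same signs: use p • u⁺ - q • u⁻
      refine ⟨p • u⁺ - q • u⁻, ?_, ?_⟩
      · exact abs_sub_of_disjoint' (smul_nonneg hp0.le hP) (smul_nonneg hq0.le hN)
          (smul_posPart_inf_smul_negPart hp0 hq0 u)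
      · rw [map_sub, map_smul, map_smul]
        simp only [smul_eq_mul, ← hb, ← ha]
        show p * b - q * a = 0
        rcases lt_or_gt_of_ne haz with hA | hA <;> rcases lt_or_gt_of_ne hbz with hB | hB
        · rw [hp, hq, abs_of_neg hA, abs_of_neg hB]; ring
        · nlinarith
        · nlinarith
        · rw [hp, hq, abs_of_pos hA, abs_of_pos hB]; ring
  -- w is a strong unit, yet H w = 0: contradiction.
  have hwunit : IsStrongUnit w := by
    intro x
    obtain ⟨α, hα, hle⟩ := hu x
    set m : ℝ := min p q with hm
    have hm0 : 0 < m := lt_min hp0 hq0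
    refine ⟨α / m, by positivity, ?_⟩
    have hlow : m • |u| ≤ |w| := by
      rw [hwabs, ← habs, smul_add]
      exact add_le_add (smul_le_smul_vec (min_le_left _ _) hP)
        (smul_le_smul_vec (min_le_right _ _) hN)
    calc |x| ≤ α • |u| := hle
      _ = (α / m) • (m • |u|) := by
          rw [smul_smul, div_mul_cancel₀ _ hm0.ne']
      _ ≤ (α / m) • |w| := smul_le_smul_of_nonneg_left hlow (by positivity)
  exact hH w hwunit hwH
end

section
/- Let L be a Riesz space (a real vector lattice) with a strong unit e > 0, and let H : L → ℝ be a linear functional with H(e) = 1 such that |H(u)| = H(|u|) for every strong unit u of L. Then for every vector subspace E of L all of whose elements are e-clean, one has |H(x)| = H(|x|) for all x ∈ E. -/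
/-- An element `x` is `e`-clean if `x = p + u` with `p` an `e`-component and
`u` a strong unit. -/
def IsEClean {L : Type*} [Lattice L] [AddCommGroup L] [Module ℝ L]
    (e x : L) : Prop :=
  ∃ p u : L, p ⊓ (e - p) = 0 ∧ IsStrongUnit u ∧ x = p + u

private lemma smul_sup_aux {L : Type*} [Lattice L] [AddCommGroup L]
    [Module ℝ L] [PosSMulMono ℝ L] {t : ℝ} (ht : 0 < t) (a b : L) :
    t • (a ⊔ b) = t • a ⊔ t • b := by
  apply le_antisymm
  · have h : a ⊔ b ≤ t⁻¹ • (t • a ⊔ t • b) := by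
      apply sup_le
      · have := smul_le_smul_of_nonneg_left (le_sup_left : t • a ≤ t • a ⊔ t • b)
          (le_of_lt (inv_pos.mpr ht))
        rwa [inv_smul_smul₀ ht.ne'] at this
      · have := smul_le_smul_of_nonneg_left (le_sup_right : t • b ≤ t • a ⊔ t • b)
          (le_of_lt (inv_pos.mpr ht))
        rwa [inv_smul_smul₀ ht.ne'] at this
    have := smul_le_smul_of_nonneg_left h ht.le
    rwa [smul_inv_smul₀ ht.ne'] at this
  · apply sup_le
    · exact smul_le_smul_of_nonneg_left le_sup_left ht.le
    · exact smul_le_smul_of_nonneg_left le_sup_right ht.le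

private lemma abs_smul_aux {L : Type*} [Lattice L] [AddCommGroup L]
    [Module ℝ L] [PosSMulMono ℝ L] {t : ℝ} (ht : 0 < t) (x : L) :
    |t • x| = t • |x| := by
  rw [abs, abs, smul_sup_aux ht, smul_neg]

theorem stmt6 {L : Type*} [Lattice L] [AddCommGroup L]
    [CovariantClass L L (· + ·) (· ≤ ·)] [Module ℝ L] [PosSMulMono ℝ L]
    (e : L) (he : 0 < e) (hse : IsStrongUnit e)
    (H : L →ₗ[ℝ] ℝ) (hH1 : H e = 1)
    (hH : ∀ u : L, IsStrongUnit u → |H u| = H |u|) :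
    ∀ E : Submodule ℝ L, (∀ x ∈ E, IsEClean e x) →
      ∀ x ∈ E, |H x| = H |x| := by
  have habs_e : |e| = e := abs_of_nonneg he.le
  -- y + e is a strong unit whenever y ≥ 0
  have hsu_shift : ∀ y : L, 0 ≤ y → IsStrongUnit (y + e) := by
    intro y hy z
    obtain ⟨α, hα, hz⟩ := hse z
    refine ⟨α, hα, hz.trans ?_⟩
    have hle : e ≤ y + e := le_add_of_nonneg_left hy
    have habs : |y + e| = y + e := abs_of_nonneg (he.le.trans hle)
    rw [habs_e, habs]
    exact smul_le_smul_of_nonneg_left hle hα.le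
  -- H is positive
  have hpos : ∀ y : L, 0 ≤ y → 0 ≤ H y := by
    intro y hy
    by_contra hneg
    push_neg at hneg
    set t : ℝ := 2 / (-(H y)) with ht
    have htpos : 0 < t := by
      apply div_pos two_pos; linarith
    have hty : (0:L) ≤ t • y := smul_nonneg htpos.le hy
    have hsu := hsu_shift (t • y) hty
    have hval := hH _ hsu
    have habs : |t • y + e| = t • y + e :=
      abs_of_nonneg (he.le.trans (le_add_of_nonneg_left hty))
    rw [habs] at hval
    have h0 : 0 ≤ H (t • y + e) := hval ▸ abs_nonneg _
    have hval2 : H (t • y + e) = t * H y + 1 := by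
      rw [map_add, map_smul, hH1]; rfl
    have hmul : t * H y = -2 := by
      rw [ht, div_mul_eq_mul_div, div_eq_iff (by linarith : -H y ≠ 0)]
      ring
    rw [hval2, hmul] at h0
    linarith
  have hmono : ∀ a b : L, a ≤ b → H a ≤ H b := by
    intro a b hab
    have := hpos (b - a) (sub_nonneg.mpr hab)
    have h2 : H (b - a) = H b - H a := map_sub H b a
    linarith [h2 ▸ this]
  intro E hE x hx
  -- easy direction
  have h1 : |H x| ≤ H |x| := by
    rw [abs_le]
    constructor
    · have := hmono _ _ (neg_le_abs x)
      rw [map_neg] at this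
      linarith
    · exact hmono _ _ (le_abs_self x)
  -- hard direction
  have h2 : H |x| ≤ |H x| := by
    apply le_of_forall_pos_le_add
    intro ε hε
    set t : ℝ := 2 / ε with htdef
    have htpos : 0 < t := div_pos two_pos hε
    obtain ⟨p, u, hp, hu, heq⟩ := hE (t • x) (E.smul_mem t hx)
    have hp0 : (0:L) ≤ p := hp ▸ inf_le_left
    have hpe : p ≤ e := sub_nonneg.mp (hp ▸ inf_le_right)
    have hHp0 : 0 ≤ H p := hpos p hp0
    have hHp1 : H p ≤ 1 := hH1 ▸ hmono _ _ hpe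
    -- |t•x| ≤ p + |u|
    have htri : |t • x| ≤ p + |u| := by
      rw [heq]
      calc |p + u| ≤ |p| + |u| := abs_add_le p u
        _ = p + |u| := by rw [abs_of_nonneg hp0]
    have hHu : |H u| = H |u| := hH u hu
    have hHux : H u = H (t • x) - H p := by
      have : H (t • x) = H p + H u := by rw [heq, map_add]
      linarith
    have hHtx : H (t • x) = t * H x := by rw [map_smul]; rfl
    have key : H |t • x| ≤ 1 + H |u| := by
      have := hmono _ _ htri
      rw [map_add] at this
      linarith
    have key2 : H |u| ≤ t * |H x| + 1 := by
      rw [← hHu, hHux, hHtx]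
      calc |t * H x - H p| ≤ |t * H x| + |H p| := abs_sub _ _
        _ ≤ t * |H x| + 1 := by
            rw [abs_mul, abs_of_pos htpos, abs_of_nonneg hHp0]
            linarith
    have habs : H |t • x| = t * H |x| := by
      rw [abs_smul_aux htpos, map_smul]; rfl
    have : t * H |x| ≤ t * |H x| + 2 := by
      rw [← habs]; linarith
    have hte : t * ε = 2 := by
      rw [htdef]; field_simp
    nlinarith [this, hte, htpos, hε]
  linarith
end

section
/- Let L be a Riesz space (a real vector lattice) with a strong unit e > 0, and let H : L → ℝ be a linear functional with H(e) = 1 such that |H(u)| = H(|u|) for every strong unit u of L. Then H(u) ≠ 0 for every strong unit u of L. -/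
theorem stmt8 {L : Type*} [Lattice L] [AddCommGroup L]
    [CovariantClass L L (· + ·) (· ≤ ·)] [Module ℝ L] [PosSMulMono ℝ L]
    (e : L) (he : 0 < e) (hse : IsStrongUnit e)
    (H : L →ₗ[ℝ] ℝ) (hH1 : H e = 1)
    (hH : ∀ u : L, IsStrongUnit u → |H u| = H |u|) :
    ∀ u : L, IsStrongUnit u → H u ≠ 0 := by
  intro u hu hu0
  obtain ⟨α, hα, hle⟩ := hu e
  rw [abs_of_pos he] at hle
  have hHu : H |u| = 0 := by rw [← hH u hu, hu0, abs_zero]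
  set w := (2 * α) • |u| - e with hw
  have hew : e ≤ w := by
    have h2 : (2 * α) • |u| = α • |u| + α • |u| := by
      rw [← add_smul]; ring_nf
    calc e = e + e - e := by abel
    _ ≤ α • |u| + α • |u| - e := by
        have := add_le_add hle hle
        exact sub_le_sub_right this e
    _ = w := by rw [hw, h2]
  have hwpos : (0 : L) ≤ w := le_trans he.le hew
  have hwsu : IsStrongUnit w := by
    intro x
    obtain ⟨β, hβ, hxe⟩ := hse x
    refine ⟨β, hβ, hxe.trans ?_⟩
    rw [abs_of_nonneg hwpos, abs_of_pos he]
    exact smul_le_smul_of_nonneg_left hew hβ.le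
  have habs := hH w hwsu
  rw [abs_of_nonneg hwpos] at habs
  have hHw : H w = -1 := by
    simp [hw, map_sub, map_smul, hHu, hH1]
  rw [hHw] at habs
  norm_num at habs
end

section
/- Let L be a Riesz space (a real vector lattice) with a strong unit e > 0, and let H : L → ℝ be a linear functional with H(e) = 1. Then the following are equivalent: (1) H(u) ≠ 0 for every strong unit u of L; (2) |H(u)| = H(|u|) for every strong unit u of L; (3) for every vector subspace E of L all of whose elements are e-clean, |H(x)| = H(|x|) for all x ∈ E. -/
set_option linter.unusedSectionVars false

section Aux
variable {L : Type*} [Lattice L] [AddCommGroup L]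
    [CovariantClass L L (· + ·) (· ≤ ·)] [Module ℝ L] [PosSMulMono ℝ L]

lemma my_abs_def (x : L) : |x| = x ⊔ -x := rfl

lemma my_smul_sup {t : ℝ} (ht : 0 < t) (x y : L) : t • (x ⊔ y) = t • x ⊔ t • y := by
  apply le_antisymm
  · have h : x ⊔ y ≤ t⁻¹ • (t • x ⊔ t • y) := by
      apply sup_le
      · have := smul_le_smul_of_nonneg_left (le_sup_left : t • x ≤ t • x ⊔ t • y)
          (le_of_lt (inv_pos.mpr ht))
        simpa [smul_smul, inv_mul_cancel₀ ht.ne'] using this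
      · have := smul_le_smul_of_nonneg_left (le_sup_right : t • y ≤ t • x ⊔ t • y)
          (le_of_lt (inv_pos.mpr ht))
        simpa [smul_smul, inv_mul_cancel₀ ht.ne'] using this
    have := smul_le_smul_of_nonneg_left h ht.le
    simpa [smul_smul, mul_inv_cancel₀ ht.ne'] using this
  · exact sup_le (smul_le_smul_of_nonneg_left le_sup_left ht.le)
      (smul_le_smul_of_nonneg_left le_sup_right ht.le)

lemma my_abs_smul (t : ℝ) (x : L) : |t • x| = |t| • |x| := by
  rcases lt_trichotomy t 0 with h | h | h
  · have h2 : |t • x| = |(-t) • (-x)| := by simp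
    rw [h2, my_abs_def ((-t) • (-x)), my_abs_def x, abs_of_neg h,
      my_smul_sup (neg_pos.mpr h)]
    simp [smul_neg, sup_comm]
  · simp [h]
  · rw [my_abs_def (t • x), my_abs_def x, abs_of_pos h, my_smul_sup h, smul_neg]

lemma my_smul_inf {t : ℝ} (ht : 0 < t) (x y : L) : t • (x ⊓ y) = t • x ⊓ t • y := by
  have h1 := my_smul_sup ht (-x) (-y)
  have h2 : x ⊓ y = -((-x) ⊔ (-y)) := by rw [neg_sup, neg_neg, neg_neg]
  rw [h2, smul_neg, h1, smul_neg, smul_neg, neg_sup, neg_neg, neg_neg]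

/-- monotonicity in the scalar -/
lemma my_smul_le_smul_s9 {a b : ℝ} (h : a ≤ b) {x : L} (hx : 0 ≤ x) : a • x ≤ b • x := by
  have h1 : 0 ≤ (b - a) • x := smul_nonneg (by linarith) hx
  have h2 := add_le_add_left h1 (a • x)
  simpa [← add_smul] using h2

lemma my_unit_of_le {u v : L} (hu : IsStrongUnit u) {c : ℝ} (hc : 0 < c)
    (h : c • |u| ≤ |v|) : IsStrongUnit v := by
  intro x
  obtain ⟨α, hα, hx⟩ := hu x
  refine ⟨α / c, div_pos hα hc, hx.trans ?_⟩
  have h1 : (α / c) • (c • |u|) ≤ (α / c) • |v| :=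
    smul_le_smul_of_nonneg_left h (le_of_lt (div_pos hα hc))
  calc α • |u| = (α / c) • (c • |u|) := by
        rw [smul_smul, div_mul_cancel₀ _ hc.ne']
    _ ≤ (α / c) • |v| := h1

lemma my_disjoint_smul {a b : L} (ha : 0 ≤ a) (hb : 0 ≤ b) (hd : a ⊓ b = 0)
    {s t : ℝ} (hs : 0 ≤ s) (ht : 0 ≤ t) : (s • a) ⊓ (t • b) = 0 := by
  set M : ℝ := max s t + 1 with hM
  have hM0 : 0 < M := by
    have h := le_trans hs (le_max_left s t)
    rw [hM]; linarith
  apply le_antisymm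
  · calc (s • a) ⊓ (t • b) ≤ (M • a) ⊓ (M • b) :=
          inf_le_inf (my_smul_le_smul_s9 (by rw [hM]; linarith [le_max_left s t]) ha)
            (my_smul_le_smul_s9 (by rw [hM]; linarith [le_max_right s t]) hb)
      _ = M • (a ⊓ b) := (my_smul_inf hM0 a b).symm
      _ = 0 := by rw [hd, smul_zero]
  · exact le_inf (smul_nonneg hs ha) (smul_nonneg ht hb)

lemma my_abs_sub_disjoint {a b : L} (ha : 0 ≤ a) (hb : 0 ≤ b) (hd : a ⊓ b = 0) :
    |a - b| = a + b := by
  have hsup : a ⊔ b = a + b := by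
    have := inf_add_sup a b
    rw [hd, zero_add] at this
    exact this
  have hpos : (a - b)⁺ = a := by
    rw [posPart_def, show (0 : L) = b - b by simp, ← sup_sub, hsup]
    simp
  have hneg : (a - b)⁻ = b := by
    rw [negPart_def, neg_sub, show (0 : L) = a - a by simp, ← sup_sub, sup_comm b a, hsup]
    simp
  rw [← posPart_add_negPart (a - b), hpos, hneg]

end Aux

section Main
variable {L : Type*} [Lattice L] [AddCommGroup L]
    [CovariantClass L L (· + ·) (· ≤ ·)] [Module ℝ L] [PosSMulMono ℝ L]

/-- (1) implies H is a positive functional. -/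
lemma my_pos (e : L) (he : 0 < e) (hse : IsStrongUnit e)
    (H : L →ₗ[ℝ] ℝ) (hH1 : H e = 1)
    (h1 : ∀ u : L, IsStrongUnit u → H u ≠ 0) :
    ∀ x : L, 0 ≤ x → 0 ≤ H x := by
  intro x hx
  by_contra hneg
  push_neg at hneg
  set t : ℝ := -(H x)⁻¹ with htdef
  have ht : 0 < t := by
    rw [htdef]
    simp only [neg_pos]
    exact inv_lt_zero.mpr hneg
  set u : L := e + t • x with hu
  have heu : e ≤ u := le_add_of_nonneg_right (smul_nonneg ht.le hx)
  have hu0 : 0 ≤ u := he.le.trans heu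
  have hunit : IsStrongUnit u := by
    apply my_unit_of_le hse one_pos
    rw [one_smul, abs_of_nonneg he.le, abs_of_nonneg hu0]
    exact heu
  have hHu : H u = 0 := by
    rw [hu, map_add, map_smul, hH1, smul_eq_mul, htdef, neg_mul,
      inv_mul_cancel₀ (ne_of_lt hneg)]
    ring
  exact h1 u hunit hHu

lemma my_abs_le (H : L →ₗ[ℝ] ℝ) (hpos : ∀ x : L, 0 ≤ x → 0 ≤ H x) (x : L) : |H x| ≤ H |x| := by
  rw [abs_le]
  constructor
  · have h0 : (0 : L) ≤ |x| + x := by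
      have h := add_le_add_right (neg_le_abs x) x
      exact (by simpa using h : (0 : L) ≤ x + |x|).trans_eq (add_comm _ _)
    have := hpos (|x| + x) h0
    rw [map_add] at this
    linarith
  · have := hpos (|x| - x) (sub_nonneg.mpr (le_abs_self x))
    rw [map_sub] at this
    linarith

/-- values on components are 0 or 1 -/
lemma my_comp (e : L) (he : 0 < e) (hse : IsStrongUnit e)
    (H : L →ₗ[ℝ] ℝ) (hH1 : H e = 1)
    (h1 : ∀ u : L, IsStrongUnit u → H u ≠ 0)
    (hpos : ∀ x : L, 0 ≤ x → 0 ≤ H x)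
    {p : L} (hp : p ⊓ (e - p) = 0) : H p = 0 ∨ H p = 1 := by
  have hp0 : 0 ≤ p := hp ▸ inf_le_left
  have hq0 : 0 ≤ e - p := hp ▸ inf_le_right
  have hc0 : 0 ≤ H p := hpos p hp0
  have hc1 : H p ≤ 1 := by
    have := hpos (e - p) hq0
    rw [map_sub, hH1] at this
    linarith
  rcases eq_or_lt_of_le hc0 with h | h
  · exact Or.inl h.symm
  rcases eq_or_lt_of_le hc1 with h' | h'
  · exact Or.inr h'
  exfalso
  set c : ℝ := H p with hc
  set t : ℝ := c / (1 - c) with htdef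
  have ht : 0 < t := div_pos h (by linarith)
  set u : L := p - t • (e - p) with hu
  have habs : |u| = p + t • (e - p) :=
    my_abs_sub_disjoint hp0 (smul_nonneg ht.le hq0)
      (by simpa [one_smul] using my_disjoint_smul hp0 hq0 hp (zero_le_one (α := ℝ)) ht.le)
  set m : ℝ := min 1 t with hm
  have hm0 : 0 < m := lt_min one_pos ht
  have hunit : IsStrongUnit u := by
    apply my_unit_of_le hse hm0
    rw [abs_of_nonneg he.le, habs]
    have h3 : m • e = m • p + m • (e - p) := by
      rw [← smul_add]
      congr 1
      abel
    rw [h3]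
    exact add_le_add
      (by simpa [one_smul] using my_smul_le_smul_s9 (min_le_left 1 t) hp0)
      (my_smul_le_smul_s9 (min_le_right 1 t) hq0)
  have hHu : H u = 0 := by
    have h1c : (1 : ℝ) - c ≠ 0 := by linarith
    rw [hu, map_sub, map_smul, map_sub, hH1, smul_eq_mul, htdef, ← hc]
    field_simp
    ring
  exact h1 u hunit hHu

/-- (1) → (2) -/
lemma my_h12 (H : L →ₗ[ℝ] ℝ)
    (h1 : ∀ u : L, IsStrongUnit u → H u ≠ 0)
    (hpos : ∀ x : L, 0 ≤ x → 0 ≤ H x) :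
    ∀ u : L, IsStrongUnit u → |H u| = H |u| := by
  intro u hu
  set a : ℝ := H (u⁺) with hadef
  set b : ℝ := H (u⁻) with hbdef
  have ha0 : 0 ≤ a := hpos _ (posPart_nonneg u)
  have hb0 : 0 ≤ b := hpos _ (negPart_nonneg u)
  have hHu : H u = a - b := by
    rw [hadef, hbdef, ← map_sub, posPart_sub_negPart]
  have hHau : H |u| = a + b := by
    rw [hadef, hbdef, ← map_add, posPart_add_negPart]
  rcases eq_or_lt_of_le ha0 with ha | ha
  · rw [hHu, hHau, ← ha]
    simpa using hb0
  rcases eq_or_lt_of_le hb0 with hb | hb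
  · rw [hHu, hHau, ← hb]
    simp [abs_of_nonneg ha0]
  exfalso
  set v : L := b • u⁺ - a • u⁻ with hv
  have hd : (b • u⁺) ⊓ (a • u⁻) = 0 :=
    my_disjoint_smul (posPart_nonneg u) (negPart_nonneg u)
      (posPart_inf_negPart_eq_zero u) hb0 ha0
  have habs : |v| = b • u⁺ + a • u⁻ :=
    my_abs_sub_disjoint (smul_nonneg hb0 (posPart_nonneg u))
      (smul_nonneg ha0 (negPart_nonneg u)) hd
  set m : ℝ := min a b with hm
  have hm0 : 0 < m := lt_min ha hb
  have hunit : IsStrongUnit v := by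
    apply my_unit_of_le (u := u) ?_ hm0
    · rw [habs, ← posPart_add_negPart u, smul_add]
      exact add_le_add (my_smul_le_smul_s9 (min_le_right a b) (posPart_nonneg u))
        (my_smul_le_smul_s9 (min_le_left a b) (negPart_nonneg u))
    · exact hu
  have hHv : H v = 0 := by
    rw [hv, map_sub, map_smul, map_smul, smul_eq_mul, smul_eq_mul, ← hadef, ← hbdef]
    ring
  exact h1 v hunit hHv

/-- (2) → (1) -/
lemma my_h21 (e : L) (he : 0 < e) (hse : IsStrongUnit e)
    (H : L →ₗ[ℝ] ℝ) (hH1 : H e = 1) (h2 : ∀ u : L, IsStrongUnit u → |H u| = H |u|) :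
    ∀ u : L, IsStrongUnit u → H u ≠ 0 := by
  intro u hu hHu
  have hau : H |u| = 0 := by
    have := h2 u hu
    rw [hHu] at this
    simpa using this.symm
  obtain ⟨α, hα, hle⟩ := hu e
  rw [abs_of_nonneg he.le] at hle
  set v : L := α • |u| - (1/2 : ℝ) • e with hv
  have hv1 : (1/2 : ℝ) • e ≤ v := by
    rw [hv]
    have h3 : e - (1/2 : ℝ) • e = (1/2 : ℝ) • e := by
      rw [sub_eq_iff_eq_add, ← add_smul]
      norm_num
    calc (1/2 : ℝ) • e = e - (1/2 : ℝ) • e := h3.symm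
      _ ≤ α • |u| - (1/2 : ℝ) • e := sub_le_sub_right hle _
  have hv0 : 0 ≤ v := le_trans (smul_nonneg (by norm_num) he.le) hv1
  have hunit : IsStrongUnit v := by
    apply my_unit_of_le hse (by norm_num : (0:ℝ) < 1/2)
    rw [abs_of_nonneg he.le, abs_of_nonneg hv0]
    exact hv1
  have hHv : H v = -(1/2) := by
    rw [hv, map_sub, map_smul, map_smul, hH1, hau, smul_eq_mul, smul_eq_mul]
    norm_num
  have := h2 v hunit
  rw [hHv, abs_of_nonneg hv0, hHv] at this
  norm_num at this

/-- (2) → (3) -/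
lemma my_h23 (e : L) (he : 0 < e) (hse : IsStrongUnit e)
    (H : L →ₗ[ℝ] ℝ) (hH1 : H e = 1) (h2 : ∀ u : L, IsStrongUnit u → |H u| = H |u|) :
    ∀ E : Submodule ℝ L, (∀ x ∈ E, IsEClean e x) → ∀ x ∈ E, |H x| = H |x| := by
  have h1 := my_h21 e he hse H hH1 h2
  have hpos := my_pos e he hse H hH1 h1
  have habsle := my_abs_le H hpos
  intro E hE x hx
  by_cases hc : ∃ t : ℝ, t ≠ 0 ∧ ∃ p u : L, p ⊓ (e - p) = 0 ∧ IsStrongUnit u ∧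
      t • x = p + u ∧ H p = 0
  · obtain ⟨t, ht, p, u, hp, hu, htx, hHp⟩ := hc
    have hp0 : 0 ≤ p := hp ▸ inf_le_left
    have hineq : H |t • x| ≤ H |u| := by
      have hle : |t • x| ≤ p + |u| := by
        rw [htx]
        calc |p + u| ≤ |p| + |u| := abs_add_le p u
          _ = p + |u| := by rw [abs_of_nonneg hp0]
        
      have := hpos (p + |u| - |t • x|) (sub_nonneg.mpr hle)
      rw [map_sub, map_add, hHp, zero_add] at this
      linarith
    have hHtx : H (t • x) = H u := by
      rw [htx, map_add, hHp, zero_add]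
    have heq : |H (t • x)| = H |t • x| := by
      apply le_antisymm (habsle _)
      calc H |t • x| ≤ H |u| := hineq
        _ = |H u| := (h2 u hu).symm
        _ = |H (t • x)| := by rw [hHtx]
    have h4 : |t| * |H x| = |t| * H |x| := by
      have l1 : |H (t • x)| = |t| * |H x| := by
        rw [map_smul, smul_eq_mul, abs_mul]
      have l2 : H |t • x| = |t| * H |x| := by
        rw [my_abs_smul, map_smul, smul_eq_mul]
      rw [l1, l2] at heq
      exact heq
    exact mul_left_cancel₀ (abs_ne_zero.mpr ht) h4
  · push_neg at hc
    have hall : ∀ t : ℝ, t ≠ 0 → ∀ p u : L, p ⊓ (e - p) = 0 → IsStrongUnit u →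
        t • x = p + u → H p = 1 := by
      intro t ht p u hp hu htx
      rcases my_comp e he hse H hH1 h1 hpos hp with h | h
      · exact absurd h (hc t ht p u hp hu htx)
      · exact h
    have hHx : H x = 0 := by
      by_contra hHx
      obtain ⟨p, u, hp, hu, htx⟩ := hE ((H x)⁻¹ • x) (E.smul_mem _ hx)
      have hp1 : H p = 1 := hall _ (inv_ne_zero hHx) p u hp hu htx
      have : H u = 0 := by
        have h5 : H ((H x)⁻¹ • x) = 1 := by
          rw [map_smul, smul_eq_mul, inv_mul_cancel₀ hHx]
        rw [htx, map_add, hp1] at h5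
        linarith
      exact h1 u hu this
    have hHax : H |x| = 0 := by
      have hge : 0 ≤ H |x| := hpos _ (abs_nonneg x)
      rcases eq_or_lt_of_le hge with h | h
      · exact h.symm
      exfalso
      set t : ℝ := 3 / H |x| with htdef
      have ht : t ≠ 0 := by positivity
      obtain ⟨p, u, hp, hu, htx⟩ := hE (t • x) (E.smul_mem _ hx)
      have hp0 : 0 ≤ p := hp ▸ inf_le_left
      have hp1 : H p = 1 := hall t ht p u hp hu htx
      have hHu : H u = -1 := by
        have h5 : H (t • x) = 0 := by rw [map_smul, smul_eq_mul, hHx, mul_zero]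
        rw [htx, map_add, hp1] at h5
        linarith
      have hHau : H |u| = 1 := by
        rw [← h2 u hu, hHu]
        norm_num
      have hineq : H |t • x| ≤ 2 := by
        have hle : |t • x| ≤ p + |u| := by
          rw [htx]
          calc |p + u| ≤ |p| + |u| := abs_add_le p u
            _ = p + |u| := by rw [abs_of_nonneg hp0]
        have := hpos (p + |u| - |t • x|) (sub_nonneg.mpr hle)
        rw [map_sub, map_add, hp1, hHau] at this
        linarith
      have h6 : H |t • x| = 3 := by
        rw [my_abs_smul, map_smul, smul_eq_mul, htdef, abs_of_pos (by positivity)]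
        field_simp
      linarith
    rw [hHx, hHax, abs_zero]

/-- (3) → (2) -/
lemma my_h32 (e : L) (he : 0 < e) (hse : IsStrongUnit e)
    (H : L →ₗ[ℝ] ℝ) (hH1 : H e = 1)
    (h3 : ∀ E : Submodule ℝ L, (∀ x ∈ E, IsEClean e x) → ∀ x ∈ E, |H x| = H |x|) :
    ∀ u : L, IsStrongUnit u → |H u| = H |u| := by
  intro u hu
  have hclean : ∀ x ∈ Submodule.span ℝ {u}, IsEClean e x := by
    intro x hx
    rw [Submodule.mem_span_singleton] at hx
    obtain ⟨t, rfl⟩ := hx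
    by_cases ht : t = 0
    · refine ⟨e, -e, ?_, ?_, ?_⟩
      · rw [sub_self]
        exact inf_eq_right.mpr he.le
      · intro y
        obtain ⟨α, hα, hy⟩ := hse y
        exact ⟨α, hα, by rwa [abs_neg]⟩
      · rw [ht, zero_smul, add_neg_cancel]
    · refine ⟨0, t • u, ?_, ?_, ?_⟩
      · rw [sub_zero]
        exact inf_eq_left.mpr he.le
      · intro y
        obtain ⟨α, hα, hy⟩ := hu y
        refine ⟨α / |t|, div_pos hα (abs_pos.mpr ht), ?_⟩
        rw [my_abs_smul, smul_smul, div_mul_cancel₀ _ (abs_ne_zero.mpr ht)]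
        exact hy
      · rw [zero_add]
  exact h3 _ hclean u (Submodule.mem_span_singleton_self u)

end Main

theorem stmt9 {L : Type*} [Lattice L] [AddCommGroup L]
    [CovariantClass L L (· + ·) (· ≤ ·)] [Module ℝ L] [PosSMulMono ℝ L]
    (e : L) (he : 0 < e) (hse : IsStrongUnit e)
    (H : L →ₗ[ℝ] ℝ) (hH1 : H e = 1) :
    ((∀ u : L, IsStrongUnit u → H u ≠ 0) ↔
      (∀ u : L, IsStrongUnit u → |H u| = H |u|)) ∧
    ((∀ u : L, IsStrongUnit u → |H u| = H |u|) ↔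
      (∀ E : Submodule ℝ L, (∀ x ∈ E, IsEClean e x) →
        ∀ x ∈ E, |H x| = H |x|)) := by
  constructor
  · constructor
    · intro h1
      exact my_h12 H h1 (my_pos e he hse H hH1 h1)
    · exact my_h21 e he hse H hH1
  · constructor
    · exact my_h23 e he hse H hH1
    · exact my_h32 e he hse H hH1
end

section
/- Let L be a Riesz space (a real vector lattice) with a strong unit e > 0. If p ∈ L is an e-component, then for every real number α with α ≠ 0 and α ≠ 1, the element p − α e is a strong unit of L. -/
section Aux

variable {L : Type*} [Lattice L] [AddCommGroup L]
    [CovariantClass L L (· + ·) (· ≤ ·)] [Module ℝ L] [PosSMulMono ℝ L]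

lemma smul_inf_aux (c : ℝ) (hc : 0 < c) (x y : L) :
    c • (x ⊓ y) = (c • x) ⊓ (c • y) := by
  apply le_antisymm
  · exact le_inf (smul_le_smul_of_nonneg_left inf_le_left hc.le)
      (smul_le_smul_of_nonneg_left inf_le_right hc.le)
  · have h1 : c⁻¹ • ((c • x) ⊓ (c • y)) ≤ x ⊓ y := by
      refine le_inf ?_ ?_
      · have := smul_le_smul_of_nonneg_left (inf_le_left (a := c • x) (b := c • y))
          (inv_nonneg.mpr hc.le)
        simpa [smul_smul, inv_mul_cancel₀ hc.ne'] using this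
      · have := smul_le_smul_of_nonneg_left (inf_le_right (a := c • x) (b := c • y))
          (inv_nonneg.mpr hc.le)
        simpa [smul_smul, inv_mul_cancel₀ hc.ne'] using this
    have := smul_le_smul_of_nonneg_left h1 hc.le
    simpa [smul_smul, mul_inv_cancel₀ hc.ne'] using this

lemma smul_le_smul_right_aux {c d : ℝ} (hcd : c ≤ d) {x : L} (hx : 0 ≤ x) :
    c • x ≤ d • x := by
  have h : 0 ≤ (d - c) • x := smul_nonneg (by linarith) hx
  calc c • x ≤ c • x + (d - c) • x := le_add_of_nonneg_right h
    _ = d • x := by rw [← add_smul]; ring_nf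

lemma abs_sub_of_disjoint {a b : L} (h : a ⊓ b = 0) : |a - b| = a + b := by
  have hsup : a ⊔ b = a + b := by
    have := inf_add_sup a b
    rw [h, zero_add] at this
    exact this
  have hpos : (a - b)⁺ = a := by
    rw [posPart_def]
    have : (a - b) ⊔ 0 = (a ⊔ b) - b := by
      rw [sup_sub]; simp
    rw [this, hsup]; abel
  have hneg : (a - b)⁻ = b := by
    rw [negPart_def]
    have h2 : -(a - b) = b - a := by abel
    have : (b - a) ⊔ 0 = (b ⊔ a) - a := by
      rw [sup_sub]; simp
    rw [h2, this, sup_comm, hsup]; abel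
  rw [← posPart_add_negPart (a - b), hpos, hneg]

lemma abs_smul_sub_smul {p q : L} (hpq : p ⊓ q = 0) (s t : ℝ) :
    |s • p - t • q| = |s| • p + |t| • q := by
  have hp0 : (0 : L) ≤ p := hpq ▸ inf_le_left
  have hq0 : (0 : L) ≤ q := hpq ▸ inf_le_right
  have hd : (|s| • p) ⊓ (|t| • q) = 0 := by
    rcases eq_or_lt_of_le (abs_nonneg s) with hs | hs
    · rw [← hs, zero_smul]
      exact inf_eq_left.mpr (smul_nonneg (abs_nonneg t) hq0)
    rcases eq_or_lt_of_le (abs_nonneg t) with ht | ht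
    · rw [← ht, zero_smul]
      exact inf_eq_right.mpr (smul_nonneg (abs_nonneg s) hp0)
    set m : ℝ := max |s| |t| with hm
    have hm0 : 0 < m := lt_max_of_lt_left hs
    apply le_antisymm
    · calc (|s| • p) ⊓ (|t| • q) ≤ (m • p) ⊓ (m • q) :=
          inf_le_inf (smul_le_smul_right_aux (le_max_left _ _) hp0)
            (smul_le_smul_right_aux (le_max_right _ _) hq0)
        _ = m • (p ⊓ q) := (smul_inf_aux m hm0 p q).symm
        _ = 0 := by rw [hpq, smul_zero]
    · exact le_inf (smul_nonneg (abs_nonneg s) hp0) (smul_nonneg (abs_nonneg t) hq0)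
  have habs : |(|s| • p) - (|t| • q)| = |s| • p + |t| • q := abs_sub_of_disjoint hd
  rcases le_or_gt 0 s with hs | hs <;> rcases le_or_gt 0 t with ht | ht
  · rw [abs_of_nonneg hs, abs_of_nonneg ht] at habs
    rw [abs_of_nonneg hs, abs_of_nonneg ht]
    exact habs
  · have : s • p - t • q = |s| • p + |t| • q := by
      rw [abs_of_nonneg hs, abs_of_neg ht, neg_smul]; abel
    rw [this, abs_of_nonneg (by positivity)]
  · have : s • p - t • q = -((|s| • p) + (|t| • q)) := by
      rw [abs_of_neg hs, abs_of_nonneg ht, neg_smul]; abel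
    rw [this, abs_neg, abs_of_nonneg (by positivity)]
  · have : s • p - t • q = -((|s| • p) - (|t| • q)) := by
      rw [abs_of_neg hs, abs_of_neg ht, neg_smul, neg_smul]; abel
    rw [this, abs_neg, habs]

end Aux

theorem stmt12 {L : Type*} [Lattice L] [AddCommGroup L]
    [CovariantClass L L (· + ·) (· ≤ ·)] [Module ℝ L] [PosSMulMono ℝ L]
    (e : L) (he : 0 < e) (hse : IsStrongUnit e)
    (p : L) (hp : p ⊓ (e - p) = 0)
    (α : ℝ) (hα0 : α ≠ 0) (hα1 : α ≠ 1) :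
    IsStrongUnit (p - α • e) := by
  set q : L := e - p with hq
  have hp0 : (0 : L) ≤ p := hp ▸ inf_le_left
  have hq0 : (0 : L) ≤ q := hp ▸ inf_le_right
  have hpe : p + q = e := by rw [hq]; abel
  have hy : p - α • e = (1 - α) • p - α • q := by
    rw [← hpe]; rw [smul_add, sub_smul, one_smul]; abel
  have habs : |p - α • e| = |1 - α| • p + |α| • q := by
    rw [hy, abs_smul_sub_smul hp]
  set c : ℝ := min |1 - α| |α| with hc
  have hc0 : 0 < c :=
    lt_min (abs_pos.mpr (sub_ne_zero.mpr fun h => hα1 h.symm)) (abs_pos.mpr hα0)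
  have hce : c • e ≤ |p - α • e| := by
    rw [habs, ← hpe, smul_add]
    exact add_le_add (smul_le_smul_right_aux (min_le_left _ _) hp0)
      (smul_le_smul_right_aux (min_le_right _ _) hq0)
  intro x
  obtain ⟨γ, hγ0, hxγ⟩ := hse x
  refine ⟨γ / c, div_pos hγ0 hc0, ?_⟩
  have he' : |e| = e := abs_of_pos he
  rw [he'] at hxγ
  calc |x| ≤ γ • e := hxγ
    _ = (γ / c) • (c • e) := by rw [smul_smul, div_mul_cancel₀ _ hc0.ne']
    _ ≤ (γ / c) • |p - α • e| :=
        smul_le_smul_of_nonneg_left hce (div_pos hγ0 hc0).le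
end

section
/- Let L be a Riesz space (a real vector lattice) with a strong unit e > 0. If u ∈ L is a strong unit and α > 0 satisfies e ≤ α|u|, then setting p = e ⊓ (α u⁺) and q = e ⊓ (α u⁻), one has p ⊓ q = 0, p + q = e, and both p and q are e-components of L. -/
private lemma inv_smul_le' {L : Type*} [Lattice L] [AddCommGroup L] [Module ℝ L]
    [PosSMulMono ℝ L] {α : ℝ} (hα : 0 < α) {x y : L} (h : x ≤ α • y) :
    α⁻¹ • x ≤ y := by
  have := smul_le_smul_of_nonneg_left h (inv_nonneg.2 hα.le)
  rwa [smul_smul, inv_mul_cancel₀ hα.ne', one_smul] at this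

private lemma smul_inf' {L : Type*} [Lattice L] [AddCommGroup L] [Module ℝ L]
    [PosSMulMono ℝ L] {α : ℝ} (hα : 0 < α) (a b : L) :
    α • (a ⊓ b) = α • a ⊓ α • b := by
  refine le_antisymm (le_inf (smul_le_smul_of_nonneg_left inf_le_left hα.le)
    (smul_le_smul_of_nonneg_left inf_le_right hα.le)) ?_
  have h : α • a ⊓ α • b = α • (α⁻¹ • (α • a ⊓ α • b)) := by
    rw [smul_smul, mul_inv_cancel₀ hα.ne', one_smul]
  rw [h]
  exact smul_le_smul_of_nonneg_left
    (le_inf (inv_smul_le' hα inf_le_left) (inv_smul_le' hα inf_le_right)) hα.le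

private lemma le_inv_smul' {L : Type*} [Lattice L] [AddCommGroup L] [Module ℝ L]
    [PosSMulMono ℝ L] {α : ℝ} (hα : 0 < α) {x y : L} (h : α • x ≤ y) :
    x ≤ α⁻¹ • y := by
  have := smul_le_smul_of_nonneg_left h (inv_nonneg.2 hα.le)
  rwa [smul_smul, inv_mul_cancel₀ hα.ne', one_smul] at this

private lemma smul_sup' {L : Type*} [Lattice L] [AddCommGroup L] [Module ℝ L]
    [PosSMulMono ℝ L] {α : ℝ} (hα : 0 < α) (a b : L) :
    α • (a ⊔ b) = α • a ⊔ α • b := by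
  refine le_antisymm ?_ (sup_le (smul_le_smul_of_nonneg_left le_sup_left hα.le)
    (smul_le_smul_of_nonneg_left le_sup_right hα.le))
  have h : α • a ⊔ α • b = α • (α⁻¹ • (α • a ⊔ α • b)) := by
    rw [smul_smul, mul_inv_cancel₀ hα.ne', one_smul]
  rw [h]
  exact smul_le_smul_of_nonneg_left
    (sup_le (le_inv_smul' hα le_sup_left) (le_inv_smul' hα le_sup_right)) hα.le

theorem stmt14 {L : Type*} [Lattice L] [AddCommGroup L]
    [CovariantClass L L (· + ·) (· ≤ ·)] [Module ℝ L] [PosSMulMono ℝ L]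
    (e : L) (he : 0 < e) (hse : IsStrongUnit e)
    (u : L) (hu : IsStrongUnit u) (α : ℝ) (hα : 0 < α) (hαu : e ≤ α • |u|) :
    (e ⊓ (α • (u ⊔ 0))) ⊓ (e ⊓ (α • (-u ⊔ 0))) = 0 ∧
    (e ⊓ (α • (u ⊔ 0))) + (e ⊓ (α • (-u ⊔ 0))) = e ∧
    (e ⊓ (α • (u ⊔ 0))) ⊓ (e - e ⊓ (α • (u ⊔ 0))) = 0 ∧
    (e ⊓ (α • (-u ⊔ 0))) ⊓ (e - e ⊓ (α • (-u ⊔ 0))) = 0 := by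
  letI : DistribLattice L := AddCommGroup.toDistribLattice L
  have hup : u ⊔ 0 = u⁺ := rfl
  have hun : -u ⊔ 0 = u⁻ := rfl
  have habs : u⁺ ⊔ u⁻ = |u| := by
    have h1 := inf_add_sup (u⁺) (u⁻)
    rw [posPart_inf_negPart_eq_zero, zero_add, posPart_add_negPart] at h1
    exact h1
  have ha : (0:L) ≤ α • (u ⊔ 0) := smul_nonneg hα.le le_sup_right
  have hb : (0:L) ≤ α • (-u ⊔ 0) := smul_nonneg hα.le le_sup_right
  have hdisj : (e ⊓ (α • (u ⊔ 0))) ⊓ (e ⊓ (α • (-u ⊔ 0))) = 0 := by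
    refine le_antisymm ?_ (le_inf (le_inf he.le ha) (le_inf he.le hb))
    calc (e ⊓ (α • (u ⊔ 0))) ⊓ (e ⊓ (α • (-u ⊔ 0)))
        ≤ (α • (u ⊔ 0)) ⊓ (α • (-u ⊔ 0)) := inf_le_inf inf_le_right inf_le_right
      _ = 0 := by rw [← smul_inf' hα, hup, hun, posPart_inf_negPart_eq_zero, smul_zero]
  have hsup : (e ⊓ (α • (u ⊔ 0))) ⊔ (e ⊓ (α • (-u ⊔ 0))) = e := by
    rw [← inf_sup_left, ← smul_sup' hα, hup, hun, habs]
    exact inf_of_le_left hαu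
  have hsum : (e ⊓ (α • (u ⊔ 0))) + (e ⊓ (α • (-u ⊔ 0))) = e := by
    rw [← inf_add_sup, hdisj, zero_add, hsup]
  have hq : e - (e ⊓ (α • (u ⊔ 0))) = e ⊓ (α • (-u ⊔ 0)) := (eq_sub_of_add_eq' hsum).symm
  have hp : e - (e ⊓ (α • (-u ⊔ 0))) = e ⊓ (α • (u ⊔ 0)) := (eq_sub_of_add_eq hsum).symm
  refine ⟨hdisj, hsum, ?_, ?_⟩
  · rw [hq]; exact hdisj
  · rw [hp, inf_comm] ; exact hdisj
end

section
/- Let L be a Riesz space (a real vector lattice) with a strong unit e > 0, and let H : L → ℝ be a linear functional with H(e) = 1 such that H(u) ≠ 0 for every strong unit u of L. Then H(u⁺)·H(u⁻) = 0 for every strong unit u of L. -/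
section Aux
variable {L : Type*} [Lattice L] [AddCommGroup L]
    [CovariantClass L L (· + ·) (· ≤ ·)] [Module ℝ L] [PosSMulMono ℝ L]

private lemma aux_smul_inf (c : ℝ) (hc : 0 < c) (a b : L) :
    c • (a ⊓ b) = (c • a) ⊓ (c • b) := by
  refine le_antisymm (le_inf (smul_le_smul_of_nonneg_left inf_le_left hc.le)
    (smul_le_smul_of_nonneg_left inf_le_right hc.le)) ?_
  have hinv : (0:ℝ) < c⁻¹ := by positivity
  have h : c⁻¹ • ((c • a) ⊓ (c • b)) ≤ a ⊓ b := by
    refine le_inf ?_ ?_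
    · calc c⁻¹ • ((c • a) ⊓ (c • b)) ≤ c⁻¹ • (c • a) :=
            smul_le_smul_of_nonneg_left inf_le_left hinv.le
        _ = a := by rw [smul_smul, inv_mul_cancel₀ hc.ne', one_smul]
    · calc c⁻¹ • ((c • a) ⊓ (c • b)) ≤ c⁻¹ • (c • b) :=
            smul_le_smul_of_nonneg_left inf_le_right hinv.le
        _ = b := by rw [smul_smul, inv_mul_cancel₀ hc.ne', one_smul]
  calc (c • a) ⊓ (c • b) = c • (c⁻¹ • ((c • a) ⊓ (c • b))) := by
        rw [smul_smul, mul_inv_cancel₀ hc.ne', one_smul]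
    _ ≤ c • (a ⊓ b) := smul_le_smul_of_nonneg_left h hc.le

/-- For `t ≠ 0`, `|u⁺ + t • u⁻| = u⁺ + |t| • u⁻`. -/
private lemma aux_abs_comb (u : L) (t : ℝ) :
    |u⁺ + t • u⁻| = u⁺ + |t| • u⁻ := by
  rcases le_or_gt 0 t with ht | ht
  · rw [abs_of_nonneg ht]
    exact abs_of_nonneg (add_nonneg (posPart_nonneg u) (smul_nonneg ht (negPart_nonneg u)))
  · have hs : (0:ℝ) < -t := by linarith
    rw [abs_of_neg ht]
    have hdisj : u⁺ ⊓ ((-t) • u⁻) = 0 := by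
      set s : ℝ := max (-t) 1 with hs_def
      have hs1 : (0:ℝ) < s := lt_max_of_lt_right one_pos
      have h1 : u⁺ ≤ s • u⁺ := by
        have hnn : 0 ≤ (s - 1) • u⁺ :=
          smul_nonneg (sub_nonneg.2 (le_max_right _ _)) (posPart_nonneg u)
        have heq : (1:ℝ) + (s - 1) = s := by ring
        calc u⁺ = (1:ℝ) • u⁺ := (one_smul ℝ _).symm
          _ ≤ (1:ℝ) • u⁺ + (s - 1) • u⁺ := le_add_of_nonneg_right hnn
          _ = s • u⁺ := by rw [← add_smul, heq]
      have h2 : (-t) • u⁻ ≤ s • u⁻ := by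
        have hnn : 0 ≤ (s - (-t)) • u⁻ :=
          smul_nonneg (sub_nonneg.2 (le_max_left _ _)) (negPart_nonneg u)
        have heq : (-t) + (s - (-t)) = s := by ring
        calc (-t) • u⁻ ≤ (-t) • u⁻ + (s - (-t)) • u⁻ := le_add_of_nonneg_right hnn
          _ = s • u⁻ := by rw [← add_smul, heq]
      refine le_antisymm ?_
        (le_inf (posPart_nonneg u) (smul_nonneg hs.le (negPart_nonneg u)))
      calc u⁺ ⊓ ((-t) • u⁻) ≤ (s • u⁺) ⊓ (s • u⁻) := inf_le_inf h1 h2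
        _ = s • (u⁺ ⊓ u⁻) := (aux_smul_inf s hs1 _ _).symm
        _ = 0 := by rw [posPart_inf_negPart_eq_zero, smul_zero]
    have key : u⁺ + t • u⁻ = u⁺ - (-t) • u⁻ := by
      rw [neg_smul, sub_neg_eq_add]
    rw [key]
    -- |a - b| = a ⊔ b - a ⊓ b, and with a ⊓ b = 0 and disjointness, a ⊔ b = a + b
    have hsup : u⁺ ⊔ ((-t) • u⁻) = u⁺ + (-t) • u⁻ := by
      have := inf_add_sup (u⁺) ((-t) • u⁻)
      rw [hdisj, zero_add] at this
      exact this
    have habs : |u⁺ - (-t) • u⁻| = u⁺ ⊔ ((-t) • u⁻) - u⁺ ⊓ ((-t) • u⁻) := by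
      rw [sup_sub_inf_eq_abs_sub, abs_sub_comm]
    rw [habs, hdisj, hsup, sub_zero]

/-- If `u` is a strong unit and `t ≠ 0`, then `u⁺ + t • u⁻` is a strong unit. -/
private lemma aux_comb_unit (u : L) (hu : IsStrongUnit u) (t : ℝ) (ht : t ≠ 0) :
    IsStrongUnit (u⁺ + t • u⁻) := by
  intro x
  obtain ⟨α, hα, hx⟩ := hu x
  set m : ℝ := min |t| 1 with hm_def
  have hm : (0:ℝ) < m := lt_min (abs_pos.2 ht) one_pos
  refine ⟨α / m, by positivity, ?_⟩
  have hbound : m • |u| ≤ |u⁺ + t • u⁻| := by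
    rw [aux_abs_comb, ← posPart_add_negPart u, smul_add]
    refine add_le_add ?_ ?_
    · have hnn : 0 ≤ (1 - m) • u⁺ :=
        smul_nonneg (sub_nonneg.2 (min_le_right _ _)) (posPart_nonneg u)
      have heq : m + (1 - m) = 1 := by ring
      calc m • u⁺ ≤ m • u⁺ + (1 - m) • u⁺ := le_add_of_nonneg_right hnn
        _ = u⁺ := by rw [← add_smul, heq, one_smul]
    · have hnn : 0 ≤ (|t| - m) • u⁻ :=
        smul_nonneg (sub_nonneg.2 (min_le_left _ _)) (negPart_nonneg u)
      have heq : m + (|t| - m) = |t| := by ring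
      calc m • u⁻ ≤ m • u⁻ + (|t| - m) • u⁻ := le_add_of_nonneg_right hnn
        _ = |t| • u⁻ := by rw [← add_smul, heq]
  calc |x| ≤ α • |u| := hx
    _ = (α / m) • (m • |u|) := by rw [smul_smul, div_mul_cancel₀ _ hm.ne']
    _ ≤ (α / m) • |u⁺ + t • u⁻| := smul_le_smul_of_nonneg_left hbound (by positivity)

end Aux

theorem stmt16 {L : Type*} [Lattice L] [AddCommGroup L]
    [CovariantClass L L (· + ·) (· ≤ ·)] [Module ℝ L] [PosSMulMono ℝ L]
    (e : L) (he : 0 < e) (hse : IsStrongUnit e)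
    (H : L →ₗ[ℝ] ℝ) (hH1 : H e = 1)
    (hH : ∀ u : L, IsStrongUnit u → H u ≠ 0) :
    ∀ u : L, IsStrongUnit u → H (u ⊔ 0) * H (-u ⊔ 0) = 0 := by
  intro u hu
  by_contra hab
  have ha : H (u ⊔ 0) ≠ 0 := fun h => hab (by rw [h, zero_mul])
  have hb : H (-u ⊔ 0) ≠ 0 := fun h => hab (by rw [h, mul_zero])
  set t : ℝ := -(H (u ⊔ 0)) / H (-u ⊔ 0) with ht_def
  have ht : t ≠ 0 := div_ne_zero (neg_ne_zero.2 ha) hb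
  have hunit : IsStrongUnit (u⁺ + t • u⁻) := aux_comb_unit u hu t ht
  have hval : H (u⁺ + t • u⁻) = 0 := by
    rw [map_add, map_smul, smul_eq_mul, posPart_def, negPart_def, ht_def]
    field_simp
    ring
  exact hH _ hunit hval
end
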